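/- For all positive integers n and k and every integer m ≥ 0, the polynomials q_m satisfy the three-term recurrence q_{m+1}(y) = (y − 2m(k − m − n/2) − (n/2)(k − 1))·q_m(y) − m(m − k)(m − 1 + n/2)(m − 1 + n/2 − k)·q_{m−1}(y), where q_{−1}(y) := 0 (and q_0(y) = 1). -/

import Mathlib

/-- Pochhammer symbol `(a)_l = a(a+1)⋯(a+l-1)`, with `(a)_0 = 1`. -/
noncomputable def poch (a : ℝ) (l : ℕ) : ℝ := ∏ i ∈ Finset.range l, (a + i)

/-- The polynomial `q_m(y) = Σ_{l=0}^m (−1)^{m−l} (n/2+l)_{m−l} (k−m)_{m−l} C(m,l)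
Π_{j=1}^l (y − j(j−1))`. -/
noncomputable def qq (n k m : ℕ) (y : ℝ) : ℝ :=
  ∑ l ∈ Finset.range (m + 1),
    (-1 : ℝ) ^ (m - l) * poch ((n : ℝ) / 2 + l) (m - l) * poch ((k : ℝ) - m) (m - l)
      * (m.choose l) * ∏ j ∈ Finset.range l, (y - ((j : ℝ) + 1) * (j : ℝ))

/-!
Expand `q_m` in the Newton basis `P_l(y) = ∏_{j<l} (y - j(j+1))`, which satisfies
`y P_l = P_{l+1} + l(l+1) P_l`. With `a_i = (n/2 + i)(i + 1 - k)`, the coefficient of `P_l` in `q_m`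
is `C(m,l) ∏_{l ≤ i < m} a_i`, so the recurrence for the `q_m` reduces to a recurrence for these
coefficients. After cancelling the common product `∏_{l ≤ i < m} a_i`, that is an identity between
binomial coefficients which follows from Pascal's rule and `(r+1) C(r,s) = (s+1) C(r+1,s+1)`.
-/

open Finset

lemma sum_range_three_term {y b d : ℝ} {x P c₀ c₁ c₂ : ℕ → ℝ} (N : ℕ)
    (hP : ∀ l, P (l + 1) = (y - x l) * P l) (hN : c₁ N = 0)
    (hc : ∀ l, c₂ l = (if l = 0 then 0 else c₁ (l - 1)) + (x l - b) * c₁ l - d * c₀ l) :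
    ∑ l ∈ range (N + 1), c₂ l * P l
      = (y - b) * ∑ l ∈ range (N + 1), c₁ l * P l
        - d * ∑ l ∈ range (N + 1), c₀ l * P l := by
  have shift : ∑ l ∈ range (N + 1), (if l = 0 then 0 else c₁ (l - 1)) * P l
      = ∑ l ∈ range (N + 1), c₁ l * P (l + 1) := by
    rw [sum_range_succ', sum_range_succ, hN]
    simp
  have split : ∑ l ∈ range (N + 1), c₂ l * P l
      = ∑ l ∈ range (N + 1), (if l = 0 then 0 else c₁ (l - 1)) * P l
        + ∑ l ∈ range (N + 1), ((x l - b) * (c₁ l * P l) - d * (c₀ l * P l)) := by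
    rw [← sum_add_distrib]
    exact sum_congr rfl fun l _ => by rw [hc]; ring
  rw [split, shift, mul_sum, mul_sum, ← sum_sub_distrib, ← sum_add_distrib]
  exact sum_congr rfl fun l _ => by rw [hP]; ring

lemma poch_succ' (a : ℝ) (d : ℕ) : poch a (d + 1) = a * poch (a + 1) d := by
  simp only [poch, prod_range_succ', Nat.cast_add, Nat.cast_one, Nat.cast_zero, add_zero]
  rw [mul_comm]
  exact congrArg (a * ·) (prod_congr rfl fun i _ => by ring)

lemma neg_one_pow_mul_poch_sub (x : ℝ) (d : ℕ) :
    (-1) ^ d * poch (x - d) d = ∏ i ∈ range d, ((i : ℝ) + 1 - x) := by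
  induction d with
  | zero => simp [poch]
  | succ d ih =>
    rw [poch_succ', prod_range_succ, ← ih, show x - ↑(d + 1) + 1 = x - d by push_cast; ring]
    push_cast
    ring

lemma poch_add_eq_prod_Ico (a : ℝ) (l d : ℕ) :
    poch (a + l) d = ∏ i ∈ Ico l (l + d), (a + i) := by
  rw [prod_Ico_eq_prod_range, Nat.add_sub_cancel_left, poch]
  push_cast
  simp only [add_assoc]

section Coefficients

variable (A K : ℝ)

def qFactor (i : ℕ) : ℝ := (A + i) * (i + 1 - K)

-- `C(m,l) = 0` for `l > m`, so this is the coefficient of `P_l` in `q_m` for every `l`.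
def qCoeff (m l : ℕ) : ℝ := m.choose l * ∏ i ∈ Ico l m, qFactor A K i

variable {A K}

lemma qCoeff_eq_zero_of_lt {m l : ℕ} (h : m < l) : qCoeff A K m l = 0 := by
  simp [qCoeff, Nat.choose_eq_zero_of_lt h]

lemma qCoeff_self (m : ℕ) : qCoeff A K m m = 1 := by
  simp [qCoeff]

lemma qCoeff_succ_succ_of_le {m l : ℕ} (h : m ≤ l) :
    qCoeff A K (m + 1) (l + 1) = qCoeff A K m l := by
  rcases h.eq_or_lt with rfl | h
  · rw [qCoeff_self, qCoeff_self]
  · rw [qCoeff_eq_zero_of_lt h, qCoeff_eq_zero_of_lt (by omega)]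

lemma qCoeff_mul_qFactor (m l : ℕ) :
    qCoeff A K m l * qFactor A K m = m.choose l * ∏ i ∈ Ico l (m + 1), qFactor A K i := by
  rcases le_or_gt l m with h | h
  · rw [qCoeff, prod_Ico_succ_top h, mul_assoc]
  · simp [qCoeff, Nat.choose_eq_zero_of_lt h]

lemma choose_mul_qFactor_succ (t j : ℕ) :
    ((t + 2).choose (j + 1) : ℝ) * qFactor A K (t + 1)
      = (t + 1).choose j * qFactor A K j
        + (((j : ℝ) + 2) * (j + 1) - (2 * ((t : ℝ) + 1) * (K - (t + 1) - A) + A * (K - 1)))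
          * (t + 1).choose (j + 1)
        - ((t : ℝ) + 1) * (t + A - K) * t.choose (j + 1) := by
  have pascal₁ : ((t + 2).choose (j + 1) : ℝ) = (t + 1).choose j + (t + 1).choose (j + 1) := by
    exact_mod_cast Nat.choose_succ_succ' (t + 1) j
  have absorb₁ : ((t : ℝ) + 2) * (t + 1).choose j = (t + 2).choose (j + 1) * (j + 1) := by
    exact_mod_cast Nat.add_one_mul_choose_eq (t + 1) j
  have pascal₀ : ((t + 1).choose (j + 1) : ℝ) = t.choose j + t.choose (j + 1) := by
    exact_mod_cast Nat.choose_succ_succ' t j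
  have absorb₀ : ((t : ℝ) + 1) * t.choose j = (t + 1).choose (j + 1) * (j + 1) := by
    exact_mod_cast Nat.add_one_mul_choose_eq t j
  simp only [qFactor]
  push_cast
  linear_combination
    ((A + j) * (j + 1 - K) + (A - K + t + j + 2) * (t + 2)) * pascal₁
      + (A - K + t + j + 2) * absorb₁ - (t + A - K) * (t + 1) * pascal₀
      - (t + A - K) * absorb₀

lemma qCoeff_succ_succ_zero (t : ℕ) :
    qCoeff A K (t + 2) 0
      = -(2 * ((t : ℝ) + 1) * (K - (t + 1) - A) + A * (K - 1)) * qCoeff A K (t + 1) 0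
        - ((t : ℝ) + 1) * ((t + 1) - K) * (t + A) * (t + A - K) * qCoeff A K t 0 := by
  simp only [qCoeff, Nat.choose_zero_right, Nat.cast_one, one_mul, Nat.Ico_zero_eq_range,
    prod_range_succ, qFactor]
  push_cast
  ring

lemma qCoeff_recurrence (t l : ℕ) :
    qCoeff A K (t + 2) l
      = (if l = 0 then 0 else qCoeff A K (t + 1) (l - 1))
        + (((l : ℝ) + 1) * l - (2 * ((t : ℝ) + 1) * (K - (t + 1) - A) + A * (K - 1)))
          * qCoeff A K (t + 1) l
        - ((t : ℝ) + 1) * ((t + 1) - K) * (t + A) * (t + A - K) * qCoeff A K t l := by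
  rcases l with _ | j
  · rw [if_pos rfl, qCoeff_succ_succ_zero]
    ring
  rw [if_neg j.succ_ne_zero, Nat.add_sub_cancel]
  rcases le_or_gt j t with hj | hj
  · set R := ∏ i ∈ Ico (j + 1) (t + 1), qFactor A K i
    have top :
        qCoeff A K (t + 2) (j + 1) = (t + 2).choose (j + 1) * qFactor A K (t + 1) * R := by
      rw [qCoeff, prod_Ico_succ_top (by omega), mul_comm _ (qFactor A K _), mul_assoc]
    have bot : qCoeff A K (t + 1) j = (t + 1).choose j * qFactor A K j * R := by
      rw [qCoeff, prod_eq_prod_Ico_succ_bot (by omega), mul_assoc]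
    have low : qCoeff A K t (j + 1) * ((A + t) * (t + 1 - K)) = t.choose (j + 1) * R :=
      qCoeff_mul_qFactor t (j + 1)
    rw [top, bot, show qCoeff A K (t + 1) (j + 1) = (t + 1).choose (j + 1) * R from rfl]
    push_cast
    linear_combination R * choose_mul_qFactor_succ (A := A) (K := K) t j
      + ((t : ℝ) + 1) * (t + A - K) * low
  · rw [qCoeff_succ_succ_of_le hj, qCoeff_eq_zero_of_lt (by omega : t + 1 < j + 1),
      qCoeff_eq_zero_of_lt (by omega : t < j + 1)]
    ring

lemma poch_mul_poch_eq_qCoeff {m l : ℕ} (h : l ≤ m) :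
    (-1) ^ (m - l) * poch (A + l) (m - l) * poch (K - m) (m - l) * m.choose l
      = qCoeff A K m l := by
  obtain ⟨d, rfl⟩ := Nat.exists_eq_add_of_le h
  have reflected :
      (-1) ^ d * poch (K - ↑(l + d)) d = ∏ i ∈ Ico l (l + d), ((i : ℝ) + 1 - K) := by
    rw [show K - ((l + d : ℕ) : ℝ) = (K - l) - d by push_cast; ring, neg_one_pow_mul_poch_sub,
      prod_Ico_eq_prod_range, Nat.add_sub_cancel_left]
    push_cast
    exact prod_congr rfl fun i _ => by ring
  calc (-1) ^ (l + d - l) * poch (A + l) (l + d - l) * poch (K - ↑(l + d)) (l + d - l)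
        * (l + d).choose l
      = (l + d).choose l * (poch (A + l) d * ((-1) ^ d * poch (K - ↑(l + d)) d)) := by
        rw [Nat.add_sub_cancel_left]; ring
    _ = qCoeff A K (l + d) l := by
        rw [reflected, poch_add_eq_prod_Ico, ← prod_mul_distrib]; rfl

end Coefficients

def newtonBasis (y : ℝ) (l : ℕ) : ℝ := ∏ j ∈ range l, (y - ((j : ℝ) + 1) * j)

lemma newtonBasis_succ (y : ℝ) (l : ℕ) :
    newtonBasis y (l + 1) = (y - ((l : ℝ) + 1) * l) * newtonBasis y l := by
  rw [newtonBasis, prod_range_succ, mul_comm]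
  rfl

lemma qq_eq_sum_qCoeff (n k m : ℕ) (y : ℝ) {N : ℕ} (hN : m < N) :
    qq n k m y = ∑ l ∈ range N, qCoeff ((n : ℝ) / 2) k m l * newtonBasis y l := by
  rw [← sum_subset (range_subset_range.2 hN) fun l _ hl => by
    rw [qCoeff_eq_zero_of_lt (by simpa using hl), zero_mul]]
  exact sum_congr rfl fun l hl => by
    rw [← poch_mul_poch_eq_qCoeff (Nat.lt_succ_iff.1 (mem_range.1 hl))]; rfl

theorem stmt1_general (n k : ℕ) (m : ℕ) (y : ℝ) :
    qq n k (m + 1) y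
      = (y - 2 * (m : ℝ) * ((k : ℝ) - m - (n : ℝ) / 2) - (n : ℝ) / 2 * ((k : ℝ) - 1))
          * qq n k m y
        - (m : ℝ) * ((m : ℝ) - k) * ((m : ℝ) - 1 + (n : ℝ) / 2) * ((m : ℝ) - 1 + (n : ℝ) / 2 - k)
            * (if m = 0 then 0 else qq n k (m - 1) y) := by
  rcases m with _ | t
  · simp [qq, poch, sum_range_succ]
    ring
  rw [if_neg t.succ_ne_zero, Nat.add_sub_cancel]
  have expand (m : ℕ) (hm : m < t + 3) := qq_eq_sum_qCoeff n k m y hm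
  have recurrence := sum_range_three_term (x := fun l => ((l : ℝ) + 1) * l) (t + 2)
    (newtonBasis_succ y) (qCoeff_eq_zero_of_lt (by omega))
    (qCoeff_recurrence (A := n / 2) (K := k) t)
  rw [expand _ (by omega), expand _ (by omega), expand _ (by omega), recurrence]
  push_cast
  ring

/-- The three-term recurrence for `q_m`, with `q_{-1} := 0`. -/
theorem stmt1 (n k : ℕ) (hn : 0 < n) (hk : 0 < k) (m : ℕ) (y : ℝ) :
    qq n k (m + 1) y
      = (y - 2 * (m : ℝ) * ((k : ℝ) - m - (n : ℝ) / 2) - (n : ℝ) / 2 * ((k : ℝ) - 1))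
          * qq n k m y
        - (m : ℝ) * ((m : ℝ) - k) * ((m : ℝ) - 1 + (n : ℝ) / 2) * ((m : ℝ) - 1 + (n : ℝ) / 2 - k)
            * (if m = 0 then 0 else qq n k (m - 1) y) :=
  stmt1_general n k m y
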